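/- arXiv:2312.05556 — 2 statements merged into one kernel-verified Lean document; each statement's English description precedes it below -/
import Mathlib

section
/- Let D : ℝ² → ℝ² be a C¹ vector field with Σ_i ∂D_i/∂x_i = 0 at every point of the RVE domain v, and let ψ : ℝ² → ℝ be C¹ on a neighbourhood of v. If both components of D and the function ψ are boundary-periodic on v, then the electrical microfluctuation term vanishes: ∫_v Σ_i D_i ∂ψ/∂x_i dv = 0. -/
open MeasureTheory

/-- First partial derivative `∂f/∂x_j` of a scalar field on `ℝ²`. -/
noncomputable def pd (f : (Fin 2 → ℝ) → ℝ) (j : Fin 2) (x : Fin 2 → ℝ) : ℝ :=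
  fderiv ℝ f x (Pi.single j 1)

/-- A function on the rectangle `[a₁,b₁]×[a₂,b₂]` is boundary-periodic if it takes equal
values at opposite points of the left/right and bottom/top edges. -/
def BoundaryPeriodic (a b : Fin 2 → ℝ) (h : (Fin 2 → ℝ) → ℝ) : Prop :=
  (∀ y ∈ Set.Icc (a 1) (b 1), h ![b 0, y] = h ![a 0, y]) ∧
  (∀ x ∈ Set.Icc (a 0) (b 0), h ![x, b 1] = h ![x, a 1])

/-!
Apply the divergence theorem on the box to the field `ψ D`. Its divergence is
`ψ div D + D · ∇ψ = D · ∇ψ`, and its flux through each pair of opposite faces cancels because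
`ψ D` is boundary-periodic.
-/

open Set

theorem integral_divergence_eq_zero_of_faces_eq {n : ℕ} {a b : Fin (n + 1) → ℝ}
    {U : Set (Fin (n + 1) → ℝ)} (hU : IsOpen U) (hvU : Icc a b ⊆ U)
    {F : Fin (n + 1) → (Fin (n + 1) → ℝ) → ℝ} (hF : ∀ i, ContDiffOn ℝ 1 (F i) U)
    (hfaces : ∀ i, ∀ y ∈ Icc (a ∘ i.succAbove) (b ∘ i.succAbove),
      F i (i.insertNth (b i) y) = F i (i.insertNth (a i) y)) :
    ∫ x in Icc a b, ∑ i, fderiv ℝ (F i) x (Pi.single i 1) = 0 := by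
  by_cases hle : a ≤ b
  swap
  · simp [Icc_eq_empty hle]
  have hdiff : ∀ i, ∀ x ∈ U, HasFDerivAt (F i) (fderiv ℝ (F i) x) x := fun i x hx =>
    (((hF i).differentiableOn one_ne_zero).differentiableAt (hU.mem_nhds hx)).hasFDerivAt
  have hint : IntegrableOn (fun x => ∑ i, fderiv ℝ (F i) x (Pi.single i 1)) (Icc a b) :=
    (continuousOn_finsetSum _ fun i _ =>
      (((hF i).continuousOn_fderiv_of_isOpen hU le_rfl).clm_apply continuousOn_const).mono
        hvU).integrableOn_compact isCompact_Icc
  rw [integral_divergence_of_hasFDerivAt_off_countable' a b hle F (fun i x => fderiv ℝ (F i) x) ∅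
    countable_empty (fun i => (hF i).continuousOn.mono hvU)
    (fun x hx i => hdiff i x (hvU (Ioo_subset_Icc_self (pi_univ_Ioo_subset a b hx.1)))) hint]
  exact Finset.sum_eq_zero fun i _ =>
    sub_eq_zero.2 (setIntegral_congr_fun measurableSet_Icc (hfaces i))

theorem pd_mul {f g : (Fin 2 → ℝ) → ℝ} {x : Fin 2 → ℝ} (hf : DifferentiableAt ℝ f x)
    (hg : DifferentiableAt ℝ g x) (j : Fin 2) :
    pd (fun y => f y * g y) j x = f x * pd g j x + g x * pd f j x := by
  simp [pd, fderiv_fun_mul hf hg]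

namespace BoundaryPeriodic

variable {a b : Fin 2 → ℝ} {f g : (Fin 2 → ℝ) → ℝ}

theorem mul (hf : BoundaryPeriodic a b f) (hg : BoundaryPeriodic a b g) :
    BoundaryPeriodic a b (fun x => f x * g x) :=
  ⟨fun y hy => congrArg₂ (· * ·) (hf.1 y hy) (hg.1 y hy),
    fun x hx => congrArg₂ (· * ·) (hf.2 x hx) (hg.2 x hx)⟩

theorem insertNth_eq (hf : BoundaryPeriodic a b f) (i : Fin 2) :
    ∀ y ∈ Icc (a ∘ i.succAbove) (b ∘ i.succAbove),
      f (i.insertNth (b i) y) = f (i.insertNth (a i) y) := by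
  intro y hy
  have hy0 := And.intro (hy.1 0) (hy.2 0)
  fin_cases i
  · convert hf.1 (y 0) hy0 using 2 <;> ext j <;> fin_cases j <;> rfl
  · convert hf.2 (y 0) hy0 using 2 <;> ext j <;> fin_cases j <;> rfl

end BoundaryPeriodic

theorem electrical_microfluctuation_vanishes_general
    (a b : Fin 2 → ℝ)
    (U : Set (Fin 2 → ℝ)) (hU : IsOpen U) (hvU : Set.Icc a b ⊆ U)
    (D : (Fin 2 → ℝ) → Fin 2 → ℝ) (hD : ContDiffOn ℝ 1 D U)
    (hdiv : ∀ x ∈ Set.Icc a b, ∑ i, pd (fun y => D y i) i x = 0)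
    (ψ : (Fin 2 → ℝ) → ℝ) (hψ : ContDiffOn ℝ 1 ψ U)
    (hperD : ∀ i, BoundaryPeriodic a b (fun x => D x i))
    (hperψ : BoundaryPeriodic a b ψ) :
    ∫ x in Set.Icc a b, ∑ i, D x i * pd ψ i x = 0 := by
  have hDi : ∀ i, ContDiffOn ℝ 1 (fun x => D x i) U := contDiffOn_pi.1 hD
  have hflux := integral_divergence_eq_zero_of_faces_eq hU hvU
    (F := fun i x => ψ x * D x i) (fun i => hψ.mul (hDi i))
    (fun i => (hperψ.mul (hperD i)).insertNth_eq i)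
  rw [← hflux]
  refine setIntegral_congr_fun measurableSet_Icc fun x hx => ?_
  have hdiffAt {f : (Fin 2 → ℝ) → ℝ} (hf : ContDiffOn ℝ 1 f U) : DifferentiableAt ℝ f x :=
    (hf.differentiableOn one_ne_zero).differentiableAt (hU.mem_nhds (hvU hx))
  change _ = ∑ i, pd (fun y => ψ y * D y i) i x
  simp only [pd_mul (hdiffAt hψ) (hdiffAt (hDi _)), Finset.sum_add_distrib, ← Finset.mul_sum,
    hdiv x hx, mul_zero, zero_add]

/-- for a divergence-free `C¹` vector field `D` on the RVE
`v = [a₁,b₁]×[a₂,b₂]` and a `C¹` scalar field `ψ`, if both components of `D` and `ψ` are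
boundary-periodic on `v`, then the electrical microfluctuation term vanishes:
`∫_v Σ_i D_i ∂ψ/∂x_i = 0`. -/
theorem electrical_microfluctuation_vanishes
    (a b : Fin 2 → ℝ) (hab0 : a 0 < b 0) (hab1 : a 1 < b 1)
    (U : Set (Fin 2 → ℝ)) (hU : IsOpen U) (hvU : Set.Icc a b ⊆ U)
    (D : (Fin 2 → ℝ) → Fin 2 → ℝ) (hD : ContDiffOn ℝ 1 D U)
    (hdiv : ∀ x ∈ Set.Icc a b, ∑ i, pd (fun y => D y i) i x = 0)
    (ψ : (Fin 2 → ℝ) → ℝ) (hψ : ContDiffOn ℝ 1 ψ U)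
    (hperD : ∀ i, BoundaryPeriodic a b (fun x => D x i))
    (hperψ : BoundaryPeriodic a b ψ) :
    ∫ x in Set.Icc a b, ∑ i, D x i * pd ψ i x = 0 :=
  electrical_microfluctuation_vanishes_general a b U hU hvU D hD hdiv ψ hψ hperD hperψ
end

section
/- (Full Hill–Mandel energy condition for flexoelectricity.) Assume the RVE domain v has its centroid at the origin (∫_v x dv = 0). Let δε_M be a 2×2 real matrix, δg_M a minor-symmetric third-order tensor, δE_M ∈ ℝ², δr : ℝ² → ℝ² a C² vector field and δr_φ : ℝ² → ℝ a C¹ scalar field on a neighbourhood of v. Define (δu_m)_i(x) = Σ_j (δε_M)_{ij} x_j + (1/2) Σ_{j,k} (δg_M)_{ijk} x_j x_k + δr_i(x) and δφ_m(x) = −Σ_i (δE_M)_i x_i + δr_φ(x), with δE_m = −∇δφ_m. Let σ (matrix field), τ (third-order tensor field) and D (vector field) be continuous on v and satisfy the microfluctuation conditions ∫_v Σ_{i,j} σ_{ij} ∂δr_i/∂x_j dv + ∫_v Σ_{i,j,k} τ_{ijk} ∂²δr_i/(∂x_j∂x_k) dv = 0 and ∫_v Σ_i D_i ∂δr_φ/∂x_i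 dv = 0. Define (σ_M)_{ij} = (1/V)∫_v σ_{ij} dv, (τ_M)_{ijk} = (1/V)∫_v (τ_{ijk} + σ_{ij} x_k) dv, and D_M = (1/V)∫_v D dv. Then (1/V) ∫_v ( Σ_{i,j} σ_{ij} ∂(δu_m)_i/∂x_j + Σ_{i,j,k} τ_{ijk} ∂²(δu_m)_i/(∂x_j∂x_k) − Σ_i D_i (δE_m)_i ) dv = Σ_{i,j} (σ_M)_{ij} (δε_M)_{ij} + Σ_{i,j,k} (τ_M)_{ijk} (δg_M)_{ijk} − Σ_i (D_M)_i (δE_M)_i. -/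
open MeasureTheory

/-- Second partial derivative `∂²f/(∂x_j ∂x_k)` of a scalar field on `ℝ²`. -/
noncomputable def pd2 (f : (Fin 2 → ℝ) → ℝ) (j k : Fin 2) (x : Fin 2 → ℝ) : ℝ :=
  pd (fun y => pd f k y) j x

/-!
Differentiating the ansatz for `δu_m` gives the strain `δε_M + δg_M x + ∇δr` and the strain
gradient `δg_M + ∇∇δr` (the minor symmetry of `δg_M` is what makes
`∇(½ δg_M : x ⊗ x) = δg_M x`).
Substituting, the virtual energy density splits into the fluctuation terms, whose integrals vanish
by the microfluctuation conditions, and a part that is linear in the constant macroscopic tensors,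
where the cross term `σ_{ij} δg_{ijk} x_k` is absorbed into the higher-order stress; integrating
that part commutes with the contractions, which produces `σ_M`, `τ_M` and `D_M`.
-/

section PartialDerivatives

variable {f g : (Fin 2 → ℝ) → ℝ} {x : Fin 2 → ℝ}

theorem pd_add (hf : DifferentiableAt ℝ f x) (hg : DifferentiableAt ℝ g x) (j : Fin 2) :
    pd (fun y => f y + g y) j x = pd f j x + pd g j x := by
  simp [pd, fderiv_fun_add hf hg]

theorem pd_neg (j : Fin 2) : pd (fun y => -f y) j x = -pd f j x := by
  simp [pd]

theorem pd_const (c : ℝ) (j : Fin 2) : pd (fun _ => c) j x = 0 := by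
  simp [pd]

theorem pd_congr (h : f =ᶠ[nhds x] g) (j : Fin 2) : pd f j x = pd g j x := by
  rw [pd, pd, h.fderiv_eq]

theorem pd_linear (c : Fin 2 → ℝ) (j : Fin 2) : pd (fun y => ∑ p, c p * y p) j x = c j := by
  simp (disch := fun_prop) [pd, fderiv_fun_sum, fderiv_const_mul, fderiv_apply, Pi.single_apply,
    -Fin.sum_univ_two]

theorem pd_quadratic {g : Fin 2 → Fin 2 → ℝ} (hg : ∀ p q, g p q = g q p) (j : Fin 2) :
    pd (fun y => (1/2) * ∑ p, ∑ q, g p q * y p * y q) j x = ∑ k, g j k * x k := by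
  simp (disch := fun_prop) [pd, fderiv_fun_sum, fderiv_const_mul, fderiv_fun_mul, fderiv_apply,
    Pi.single_apply, -Fin.sum_univ_two, Finset.sum_add_distrib, hg _ j, mul_comm (x _)]
  ring

theorem differentiableAt_pd (hf : ContDiffAt ℝ 2 f x) (k : Fin 2) :
    DifferentiableAt ℝ (fun y => pd f k y) x :=
  ((hf.fderiv_right le_rfl).differentiableAt one_ne_zero).clm_apply (differentiableAt_const _)

theorem pd2_add (hf : ContDiffAt ℝ 2 f x) (hg : ContDiffAt ℝ 2 g x) (j k : Fin 2) :
    pd2 (fun y => f y + g y) j k x = pd2 f j k x + pd2 g j k x := by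
  have hnear :
      (fun y => pd (fun z => f z + g z) k y) =ᶠ[nhds x] fun y => pd f k y + pd g k y := by
    filter_upwards [hf.eventually (by simp), hg.eventually (by simp)] with y hfy hgy
    exact pd_add (hfy.differentiableAt two_ne_zero) (hgy.differentiableAt two_ne_zero) k
  rw [pd2, pd_congr hnear, pd_add (differentiableAt_pd hf k) (differentiableAt_pd hg k)]
  rfl

theorem pd2_linear (c : Fin 2 → ℝ) (j k : Fin 2) :
    pd2 (fun y => ∑ p, c p * y p) j k x = 0 := by
  simp only [pd2, pd_linear, pd_const]

theorem pd2_quadratic {g : Fin 2 → Fin 2 → ℝ} (hg : ∀ p q, g p q = g q p) (j k : Fin 2) :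
    pd2 (fun y => (1/2) * ∑ p, ∑ q, g p q * y p * y q) j k x = g j k := by
  simp only [pd2, pd_quadratic hg, pd_linear, hg k j]

theorem pd_linear_quadratic_add {u : (Fin 2 → ℝ) → ℝ} {ε : Fin 2 → ℝ} {g : Fin 2 → Fin 2 → ℝ}
    (hu : ∀ y, u y = (∑ p, ε p * y p) + (1/2) * (∑ p, ∑ q, g p q * y p * y q) + f y)
    (hg : ∀ p q, g p q = g q p) (hf : DifferentiableAt ℝ f x) (j : Fin 2) :
    pd u j x = ε j + ∑ k, g j k * x k + pd f j x := by
  rw [show u = _ from funext hu, pd_add (by fun_prop) hf, pd_add (by fun_prop) (by fun_prop),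
    pd_linear, pd_quadratic hg]

theorem pd2_linear_quadratic_add {u : (Fin 2 → ℝ) → ℝ} {ε : Fin 2 → ℝ} {g : Fin 2 → Fin 2 → ℝ}
    (hu : ∀ y, u y = (∑ p, ε p * y p) + (1/2) * (∑ p, ∑ q, g p q * y p * y q) + f y)
    (hg : ∀ p q, g p q = g q p) (hf : ContDiffAt ℝ 2 f x) (j k : Fin 2) :
    pd2 u j k x = g j k + pd2 f j k x := by
  rw [show u = _ from funext hu, pd2_add (by fun_prop) hf, pd2_add (by fun_prop) (by fun_prop),
    pd2_linear, pd2_quadratic hg, zero_add]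

theorem neg_pd_neg_linear_add {φ : (Fin 2 → ℝ) → ℝ} {E : Fin 2 → ℝ}
    (hφ : ∀ y, φ y = -(∑ p, E p * y p) + f y) (hf : DifferentiableAt ℝ f x) (j : Fin 2) :
    -pd φ j x = E j - pd f j x := by
  rw [show φ = _ from funext hφ, pd_add (by fun_prop) hf, pd_neg, pd_linear]
  ring

theorem continuousOn_pd {U : Set (Fin 2 → ℝ)} (hU : IsOpen U) (hf : ContDiffOn ℝ 1 f U)
    (k : Fin 2) : ContinuousOn (fun y => pd f k y) U :=
  (hf.continuousOn_fderiv_of_isOpen hU le_rfl).clm_apply continuousOn_const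

theorem continuousOn_pd2 {U : Set (Fin 2 → ℝ)} (hU : IsOpen U) (hf : ContDiffOn ℝ 2 f U)
    (j k : Fin 2) : ContinuousOn (fun y => pd2 f j k y) U :=
  continuousOn_pd hU ((hf.fderiv_of_isOpen hU (by norm_num)).clm_apply contDiffOn_const) j

end PartialDerivatives

theorem contractions_eq_macro_add_fluctuation {ι : Type*} [Fintype ι]
    {σ ε R u : ι → ι → ℝ} {τ g S w : ι → ι → ι → ℝ} {D E P e x : ι → ℝ}
    (hu : ∀ i j, u i j = ε i j + ∑ k, g i j k * x k + R i j)
    (hw : ∀ i j k, w i j k = g i j k + S i j k) (he : ∀ i, e i = E i - P i) :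
    (∑ i, ∑ j, σ i j * u i j) + (∑ i, ∑ j, ∑ k, τ i j k * w i j k) - ∑ i, D i * e i
      = ((∑ i, ∑ j, σ i j * ε i j) + (∑ i, ∑ j, ∑ k, (τ i j k + σ i j * x k) * g i j k)
          - ∑ i, D i * E i)
        + ((∑ i, ∑ j, σ i j * R i j) + ∑ i, ∑ j, ∑ k, τ i j k * S i j k) + ∑ i, D i * P i := by
  have hcross (i j : ι) : σ i j * ∑ k, g i j k * x k = ∑ k, σ i j * x k * g i j k := by
    rw [Finset.mul_sum]
    exact Finset.sum_congr rfl fun k _ => by ring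
  simp only [hu, hw, he, mul_add, add_mul, mul_sub, Finset.sum_add_distrib,
    Finset.sum_sub_distrib, hcross]
  ring

theorem integral_contractions_const {α ι : Type*} [MeasurableSpace α] {μ : Measure α} [Fintype ι]
    {σ : ι → ι → α → ℝ} {θ : ι → ι → ι → α → ℝ} {D : α → ι → ℝ}
    (hσ : ∀ i j, Integrable (σ i j) μ) (hθ : ∀ i j k, Integrable (θ i j k) μ)
    (hD : ∀ i, Integrable (fun x => D x i) μ) (ε : ι → ι → ℝ) (g : ι → ι → ι → ℝ) (E : ι → ℝ) :
    ∫ x, ((∑ i, ∑ j, σ i j x * ε i j) + (∑ i, ∑ j, ∑ k, θ i j k x * g i j k)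
        - ∑ i, D x i * E i) ∂μ
      = (∑ i, ∑ j, (∫ x, σ i j x ∂μ) * ε i j) + (∑ i, ∑ j, ∑ k, (∫ x, θ i j k x ∂μ) * g i j k)
        - ∑ i, (∫ x, D x i ∂μ) * E i := by
  rw [integral_sub (by fun_prop) (by fun_prop), integral_add (by fun_prop) (by fun_prop)]
  simp (disch := exact fun _ _ => by fun_prop) only [integral_finsetSum, integral_mul_const]

theorem hill_mandel_flexoelectric_general
    (a b : Fin 2 → ℝ)
    (V : ℝ)
    (δεM : Fin 2 → Fin 2 → ℝ) (δgM : Fin 2 → Fin 2 → Fin 2 → ℝ)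
    (hδgM : ∀ i j k, δgM i j k = δgM i k j)
    (δEM : Fin 2 → ℝ)
    (U : Set (Fin 2 → ℝ)) (hU : IsOpen U) (hvU : Set.Icc a b ⊆ U)
    (δr : (Fin 2 → ℝ) → Fin 2 → ℝ) (hδr : ContDiffOn ℝ 2 δr U)
    (δrφ : (Fin 2 → ℝ) → ℝ) (hδrφ : ContDiffOn ℝ 1 δrφ U)
    (δum : (Fin 2 → ℝ) → Fin 2 → ℝ)
    (hδum : ∀ x i, δum x i =
        (∑ j, δεM i j * x j) + (1/2) * (∑ j, ∑ k, δgM i j k * x j * x k) + δr x i)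
    (δφm : (Fin 2 → ℝ) → ℝ)
    (hδφm : ∀ x, δφm x = -(∑ i, δEM i * x i) + δrφ x)
    (δEm : Fin 2 → (Fin 2 → ℝ) → ℝ)
    (hδEm : ∀ i x, δEm i x = -pd δφm i x)
    (σ : Fin 2 → Fin 2 → (Fin 2 → ℝ) → ℝ)
    (hσ : ∀ i j, ContinuousOn (σ i j) (Set.Icc a b))
    (τ : Fin 2 → Fin 2 → Fin 2 → (Fin 2 → ℝ) → ℝ)
    (hτ : ∀ i j k, ContinuousOn (τ i j k) (Set.Icc a b))
    (D : (Fin 2 → ℝ) → Fin 2 → ℝ)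
    (hD : ∀ i, ContinuousOn (fun x => D x i) (Set.Icc a b))
    (hmicroMech : (∫ x in Set.Icc a b, ∑ i, ∑ j, σ i j x * pd (fun y => δr y i) j x)
        + (∫ x in Set.Icc a b,
            ∑ i, ∑ j, ∑ k, τ i j k x * pd2 (fun y => δr y i) j k x) = 0)
    (hmicroElec : ∫ x in Set.Icc a b, ∑ i, D x i * pd δrφ i x = 0)
    (σM : Fin 2 → Fin 2 → ℝ)
    (hσM : ∀ i j, σM i j = (1/V) * ∫ x in Set.Icc a b, σ i j x)
    (τM : Fin 2 → Fin 2 → Fin 2 → ℝ)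
    (hτM : ∀ i j k, τM i j k = (1/V) * ∫ x in Set.Icc a b, (τ i j k x + σ i j x * x k))
    (DM : Fin 2 → ℝ)
    (hDM : ∀ i, DM i = (1/V) * ∫ x in Set.Icc a b, D x i) :
    (1/V) * ∫ x in Set.Icc a b,
        ((∑ i, ∑ j, σ i j x * pd (fun y => δum y i) j x)
          + (∑ i, ∑ j, ∑ k, τ i j k x * pd2 (fun y => δum y i) j k x)
          - ∑ i, D x i * δEm i x)
      = (∑ i, ∑ j, σM i j * δεM i j)
        + (∑ i, ∑ j, ∑ k, τM i j k * δgM i j k)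
        - ∑ i, DM i * δEM i := by
  set v := Set.Icc a b
  have hintegrable {f : (Fin 2 → ℝ) → ℝ} (hf : ContinuousOn f v) :
      Integrable f (volume.restrict v) :=
    hf.integrableOn_compact isCompact_Icc
  have hδr_at {x} (hx : x ∈ v) (i : Fin 2) : ContDiffAt ℝ 2 (fun y => δr y i) x :=
    contDiffAt_pi.mp (hδr.contDiffAt (hU.mem_nhds (hvU hx))) i
  have hδr_pd (i j : Fin 2) : ContinuousOn (fun x => pd (fun y => δr y i) j x) v :=
    (continuousOn_pd hU ((contDiffOn_pi.mp hδr i).of_le one_le_two) j).mono hvU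
  have hδr_pd2 (i j k : Fin 2) : ContinuousOn (fun x => pd2 (fun y => δr y i) j k x) v :=
    (continuousOn_pd2 hU (contDiffOn_pi.mp hδr i) j k).mono hvU
  have hδrφ_pd (i : Fin 2) : ContinuousOn (fun x => pd δrφ i x) v :=
    (continuousOn_pd hU hδrφ i).mono hvU
  rw [setIntegral_congr_fun measurableSet_Icc fun x hx =>
      contractions_eq_macro_add_fluctuation (σ := (σ · · x)) (τ := (τ · · · x)) (D := D x)
        (fun i j => pd_linear_quadratic_add (hδum · i) (hδgM i)
          ((hδr_at hx i).differentiableAt two_ne_zero) j)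
        (fun i j k => pd2_linear_quadratic_add (hδum · i) (hδgM i) (hδr_at hx i) j k)
        (fun i => (hδEm i x).trans (neg_pd_neg_linear_add hδφm
          ((hδrφ.contDiffAt (hU.mem_nhds (hvU hx))).differentiableAt one_ne_zero) i)),
    integral_add (hintegrable (by fun_prop)) (hintegrable (by fun_prop)),
    integral_add (hintegrable (by fun_prop)) (hintegrable (by fun_prop)),
    integral_add (hintegrable (by fun_prop)) (hintegrable (by fun_prop)),
    hmicroMech, hmicroElec, add_zero, add_zero,
    integral_contractions_const (θ := fun i j k x => τ i j k x + σ i j x * x k)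
      (fun i j => hintegrable (hσ i j)) (fun i j k => hintegrable (by fun_prop))
      (fun i => hintegrable (hD i))]
  simp only [hσM, hτM, hDM, mul_sub, mul_add, Finset.mul_sum, mul_assoc]

/-- full Hill–Mandel energy condition for flexoelectricity: with
`(δu_m)_i(x) = Σ_j (δε_M)_{ij} x_j + (1/2) Σ_{j,k} (δg_M)_{ijk} x_j x_k + δr_i(x)`,
`δφ_m(x) = −Σ_i (δE_M)_i x_i + δr_φ(x)`, `δE_m = −∇δφ_m`, and vanishing mechanical and
electrical microfluctuation terms, the volume average of the microscopic virtual energy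
equals the macroscopic one:
`(1/V)∫_v (σ:δε_m + τ∶δg_m − D·δE_m) = σ_M:δε_M + τ_M∶δg_M − D_M·δE_M`. -/
theorem hill_mandel_flexoelectric
    (a b : Fin 2 → ℝ) (hab0 : a 0 < b 0) (hab1 : a 1 < b 1)
    (V : ℝ) (hV : V = (b 0 - a 0) * (b 1 - a 1))
    (hcent : (∫ x in Set.Icc a b, x) = (0 : Fin 2 → ℝ))
    (δεM : Fin 2 → Fin 2 → ℝ) (δgM : Fin 2 → Fin 2 → Fin 2 → ℝ)
    (hδgM : ∀ i j k, δgM i j k = δgM i k j)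
    (δEM : Fin 2 → ℝ)
    (U : Set (Fin 2 → ℝ)) (hU : IsOpen U) (hvU : Set.Icc a b ⊆ U)
    (δr : (Fin 2 → ℝ) → Fin 2 → ℝ) (hδr : ContDiffOn ℝ 2 δr U)
    (δrφ : (Fin 2 → ℝ) → ℝ) (hδrφ : ContDiffOn ℝ 1 δrφ U)
    (δum : (Fin 2 → ℝ) → Fin 2 → ℝ)
    (hδum : ∀ x i, δum x i =
        (∑ j, δεM i j * x j) + (1/2) * (∑ j, ∑ k, δgM i j k * x j * x k) + δr x i)
    (δφm : (Fin 2 → ℝ) → ℝ)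
    (hδφm : ∀ x, δφm x = -(∑ i, δEM i * x i) + δrφ x)
    (δEm : Fin 2 → (Fin 2 → ℝ) → ℝ)
    (hδEm : ∀ i x, δEm i x = -pd δφm i x)
    (σ : Fin 2 → Fin 2 → (Fin 2 → ℝ) → ℝ)
    (hσ : ∀ i j, ContinuousOn (σ i j) (Set.Icc a b))
    (τ : Fin 2 → Fin 2 → Fin 2 → (Fin 2 → ℝ) → ℝ)
    (hτ : ∀ i j k, ContinuousOn (τ i j k) (Set.Icc a b))
    (D : (Fin 2 → ℝ) → Fin 2 → ℝ)
    (hD : ∀ i, ContinuousOn (fun x => D x i) (Set.Icc a b))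
    (hmicroMech : (∫ x in Set.Icc a b, ∑ i, ∑ j, σ i j x * pd (fun y => δr y i) j x)
        + (∫ x in Set.Icc a b,
            ∑ i, ∑ j, ∑ k, τ i j k x * pd2 (fun y => δr y i) j k x) = 0)
    (hmicroElec : ∫ x in Set.Icc a b, ∑ i, D x i * pd δrφ i x = 0)
    (σM : Fin 2 → Fin 2 → ℝ)
    (hσM : ∀ i j, σM i j = (1/V) * ∫ x in Set.Icc a b, σ i j x)
    (τM : Fin 2 → Fin 2 → Fin 2 → ℝ)
    (hτM : ∀ i j k, τM i j k = (1/V) * ∫ x in Set.Icc a b, (τ i j k x + σ i j x * x k))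
    (DM : Fin 2 → ℝ)
    (hDM : ∀ i, DM i = (1/V) * ∫ x in Set.Icc a b, D x i) :
    (1/V) * ∫ x in Set.Icc a b,
        ((∑ i, ∑ j, σ i j x * pd (fun y => δum y i) j x)
          + (∑ i, ∑ j, ∑ k, τ i j k x * pd2 (fun y => δum y i) j k x)
          - ∑ i, D x i * δEm i x)
      = (∑ i, ∑ j, σM i j * δεM i j)
        + (∑ i, ∑ j, ∑ k, τM i j k * δgM i j k)
        - ∑ i, DM i * δEM i :=
  hill_mandel_flexoelectric_general a b V δεM δgM hδgM δEM U hU hvU δr hδr δrφ hδrφ δum hδum δφm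
    hδφm δEm hδEm σ hσ τ hτ D hD hmicroMech hmicroElec σM hσM τM hτM DM hDM
end
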